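/- Let (Ω, P) be a probability space, M ≥ 1, and X_1, …, X_M independent random variables each taking values in {−1, 1}. Set p̄ = (1/M)·∑_{m=1}^{M} P(X_m = 1), and let k be an integer with 0 ≤ k < M. If 0 < p̄ < (M − k)/(2M), then P(∑_{m=1}^{M} X_m + k ≥ 0) ≤ [ ((M−k)(1−p̄)) / ((M+k)·p̄) ]^{k/2} · ( √((M−k)/(M+k)) + √((M+k)/(M−k)) )^{M} · ( p̄·(1−p̄) )^{M/2}. -/

import Mathlib

/-!
Chernoff's bound `P(∑ X_m ≥ -k) ≤ e^{tk} ∏ E e^{t X_m}` at `t = ½ log r`, where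
`r = (M-k)(1-p̄) / ((M+k)p̄) ≥ 1` exactly when `p̄ ≤ (M-k)/(2M)`. Each factor is
`p_m e^t + (1-p_m) e^{-t}`, affine in `p_m`, so by AM-GM the product is at most the `M`-th power
of the factor at `p̄`; at this `t` that factor is `√(p̄(1-p̄)) (√((M-k)/(M+k)) + √((M+k)/(M-k)))`,
and `e^{tk} = r^{k/2}`.
-/

open MeasureTheory ProbabilityTheory Real Finset

theorem Real.prod_le_arith_mean_pow {ι : Type*} (s : Finset ι) (z : ι → ℝ)
    (hz : ∀ i ∈ s, 0 ≤ z i) : ∏ i ∈ s, z i ≤ ((∑ i ∈ s, z i) / #s) ^ #s := by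
  rcases s.eq_empty_or_nonempty with rfl | hs
  · simp
  have hn : #s ≠ 0 := hs.card_ne_zero
  have hmean := geom_mean_le_arith_mean_weighted s (fun _ => ((#s : ℕ) : ℝ)⁻¹) z
    (fun _ _ => by positivity) (by simp [hn]) hz
  rw [finsetProd_rpow s z hz, ← mul_sum, inv_mul_eq_div] at hmean
  calc ∏ i ∈ s, z i = ((∏ i ∈ s, z i) ^ ((#s : ℝ)⁻¹)) ^ #s :=
        (rpow_inv_natCast_pow (prod_nonneg hz) hn).symm
    _ ≤ _ := pow_le_pow_left₀ (rpow_nonneg (prod_nonneg hz) _) hmean _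

theorem Real.mul_exp_add_one_sub_mul_exp_neg_half_log {p a b : ℝ} (hp0 : 0 < p) (hp1 : p < 1)
    (ha : 0 < a) (hb : 0 < b) :
    p * exp (log (a * (1 - p) / (b * p)) / 2) + (1 - p) * exp (-(log (a * (1 - p) / (b * p)) / 2))
      = √(p * (1 - p)) * (√(a / b) + √(b / a)) := by
  set r := a * (1 - p) / (b * p) with hr_def
  have hq : 0 < 1 - p := by linarith
  have hr : 0 < r := by positivity
  have hexp : exp (log r / 2) = √r := by
    rw [sqrt_eq_rpow, rpow_def_of_pos hr, div_eq_mul_one_div]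
  have hpq : 0 ≤ p * (1 - p) := by positivity
  have hleft : p * √r = √(p * (1 - p)) * √(a / b) := by
    rw [← sqrt_mul hpq, show p * (1 - p) * (a / b) = p ^ 2 * r by rw [hr_def]; field_simp,
      sqrt_mul (sq_nonneg p), sqrt_sq hp0.le]
  have hright : (1 - p) * (√r)⁻¹ = √(p * (1 - p)) * √(b / a) := by
    rw [← sqrt_inv, ← sqrt_mul hpq, show p * (1 - p) * (b / a) = (1 - p) ^ 2 * r⁻¹ by
      rw [hr_def]; field_simp, sqrt_mul (sq_nonneg _), sqrt_sq hq.le]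
  rw [exp_neg, hexp, hleft, hright, mul_add]

section SignVariables

variable {Ω : Type*} [MeasurableSpace Ω] {μ : Measure Ω}

theorem integrable_exp_mul_of_eq_one_or_eq_neg_one [IsFiniteMeasure μ] {X : Ω → ℝ}
    (hX : Measurable X) (hval : ∀ ω, X ω = 1 ∨ X ω = -1) (t : ℝ) :
    Integrable (fun ω => exp (t * X ω)) μ := by
  refine Integrable.of_bound (by fun_prop) (exp |t|) (ae_of_all _ fun ω => ?_)
  rw [norm_of_nonneg (exp_nonneg _), exp_le_exp]
  rcases hval ω with h | h <;> simp [h, le_abs_self, neg_le_abs]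

theorem mgf_of_eq_one_or_eq_neg_one [IsProbabilityMeasure μ] {X : Ω → ℝ} (hX : Measurable X)
    (hval : ∀ ω, X ω = 1 ∨ X ω = -1) (t : ℝ) :
    mgf X μ t = μ.real {ω | X ω = 1} * exp t + (1 - μ.real {ω | X ω = 1}) * exp (-t) := by
  classical
  have hS : MeasurableSet {ω | X ω = 1} := hX (measurableSet_singleton 1)
  have hpiece : (fun ω => exp (t * X ω))
      = {ω | X ω = 1}.piecewise (fun _ => exp t) (fun _ => exp (-t)) := by
    funext ω
    by_cases h : X ω = 1
    · rw [Set.piecewise_eq_of_mem _ _ _ (show ω ∈ {ω | X ω = 1} from h), h, mul_one]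
    · rw [Set.piecewise_eq_of_notMem _ _ _ (show ω ∉ {ω | X ω = 1} from h),
        (hval ω).resolve_left h, mul_neg_one]
  rw [mgf, hpiece, integral_piecewise hS (integrable_const _).integrableOn
    (integrable_const _).integrableOn, setIntegral_const, setIntegral_const,
    probReal_compl_eq_one_sub hS, smul_eq_mul, smul_eq_mul]

theorem ProbabilityTheory.iIndepFun.measureReal_sum_ge_le_of_eq_one_or_eq_neg_one [IsProbabilityMeasure μ]
    {ι : Type*} [Fintype ι] [Nonempty ι] {X : ι → Ω → ℝ} (hindep : iIndepFun X μ)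
    (hmeas : ∀ i, Measurable (X i)) (hval : ∀ i ω, X i ω = 1 ∨ X i ω = -1) {p : ℝ}
    (hp : ∑ i, μ.real {ω | X i ω = 1} = Fintype.card ι * p) {t : ℝ} (ht : 0 ≤ t) (a : ℝ) :
    μ.real {ω | a ≤ ∑ i, X i ω} ≤
      exp (-t * a) * (p * exp t + (1 - p) * exp (-t)) ^ Fintype.card ι := by
  set q : ι → ℝ := fun i => μ.real {ω | X i ω = 1}
  have hint : Integrable (fun ω => exp (t * (∑ i, X i) ω)) μ :=
    hindep.integrable_exp_mul_sum hmeas fun i _ =>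
      integrable_exp_mul_of_eq_one_or_eq_neg_one (hmeas i) (hval i) t
  have hmean : (∑ i, (q i * exp t + (1 - q i) * exp (-t))) / Fintype.card ι
      = p * exp t + (1 - p) * exp (-t) := by
    simp only [sum_add_distrib, ← sum_mul, sum_sub_distrib, q, hp, sum_const, card_univ,
      nsmul_eq_mul, mul_one]
    field_simp
  calc μ.real {ω | a ≤ ∑ i, X i ω} ≤ exp (-t * a) * mgf (∑ i, X i) μ t := by
        simpa only [Finset.sum_apply] using measure_ge_le_exp_mul_mgf a ht hint
    _ = exp (-t * a) * ∏ i, (q i * exp t + (1 - q i) * exp (-t)) := by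
        simp only [hindep.mgf_sum hmeas, mgf_of_eq_one_or_eq_neg_one (hmeas _) (hval _), q]
    _ ≤ exp (-t * a) * (p * exp t + (1 - p) * exp (-t)) ^ Fintype.card ι := by
        rw [← hmean, ← card_univ]
        gcongr
        exact prod_le_arith_mean_pow _ _ fun i _ =>
          add_nonneg (mul_nonneg measureReal_nonneg (exp_nonneg _))
            (mul_nonneg (sub_nonneg.2 measureReal_le_one) (exp_nonneg _))

end SignVariables

theorem stmt_6_general {Ω : Type*} [MeasurableSpace Ω] (P : Measure Ω) [IsProbabilityMeasure P]
    (M : ℕ)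
    (X : Fin M → Ω → ℝ)
    (hmeas : ∀ m, Measurable (X m))
    (hindep : iIndepFun X P)
    (hval : ∀ m ω, X m ω = 1 ∨ X m ω = -1)
    (pbar : ℝ)
    (hpbar : pbar = (1 / M) * ∑ m, (P {ω | X m ω = 1}).toReal)
    (k : ℕ) (hk : k < M)
    (hp0 : 0 < pbar) (hplt : pbar < ((M : ℝ) - k) / (2 * M)) :
    (P {ω | 0 ≤ (∑ m, X m ω) + k}).toReal ≤
      ((((M : ℝ) - k) * (1 - pbar)) / (((M : ℝ) + k) * pbar)) ^ ((k : ℝ) / 2) *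
        (Real.sqrt (((M : ℝ) - k) / ((M : ℝ) + k)) +
          Real.sqrt (((M : ℝ) + k) / ((M : ℝ) - k))) ^ M *
        (pbar * (1 - pbar)) ^ ((M : ℝ) / 2) := by
  have : Nonempty (Fin M) := Fin.pos_iff_nonempty.mp (by omega)
  have hMpos : (0 : ℝ) < M := by exact_mod_cast (show 0 < M by omega)
  have hkM : (k : ℝ) < M := by exact_mod_cast hk
  have hMk : (0 : ℝ) < M - k := by linarith
  have hMk' : (0 : ℝ) < M + k := by positivity
  have hplt' : pbar * (2 * M) < M - k := (lt_div_iff₀ (by positivity)).mp hplt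
  have hp1 : pbar < 1 := by nlinarith
  set r := ((M : ℝ) - k) * (1 - pbar) / (((M : ℝ) + k) * pbar)
  have hr : 1 ≤ r := by rw [le_div_iff₀ (by positivity)]; nlinarith
  have hbound := hindep.measureReal_sum_ge_le_of_eq_one_or_eq_neg_one hmeas hval (p := pbar)
    (by rw [hpbar, Fintype.card_fin]; field_simp; rfl) (t := log r / 2)
    (by have := log_nonneg hr; positivity) (-k)
  have hset : {ω | 0 ≤ (∑ m, X m ω) + k} = {ω | -(k : ℝ) ≤ ∑ m, X m ω} := by
    ext ω; simp only [Set.mem_ofPred_eq, neg_le_iff_add_nonneg]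
  rw [← measureReal_def, hset]
  refine hbound.trans_eq ?_
  rw [mul_exp_add_one_sub_mul_exp_neg_half_log hp0 hp1 hMk hMk', Fintype.card_fin, mul_pow,
    rpow_def_of_pos (by positivity), sqrt_eq_rpow, ← rpow_natCast, ← rpow_mul (by nlinarith)]
  ring_nf

/-- Chernoff-type bound with an additive Byzantine offset `k`: if
`X_1, …, X_M` are independent `{-1,1}`-valued random variables with
`p̄ = (1/M) ∑ P(X_m = 1)` satisfying `0 < p̄ < (M-k)/(2M)`, then
`P(∑ X_m + k ≥ 0) ≤ [((M-k)(1-p̄))/((M+k)p̄)]^(k/2) · (√((M-k)/(M+k)) + √((M+k)/(M-k)))^M ·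
(p̄(1-p̄))^(M/2)`. -/
theorem stmt_6 {Ω : Type*} [MeasurableSpace Ω] (P : Measure Ω) [IsProbabilityMeasure P]
    (M : ℕ) (hM : 1 ≤ M)
    (X : Fin M → Ω → ℝ)
    (hmeas : ∀ m, Measurable (X m))
    (hindep : iIndepFun X P)
    (hval : ∀ m ω, X m ω = 1 ∨ X m ω = -1)
    (pbar : ℝ)
    (hpbar : pbar = (1 / M) * ∑ m, (P {ω | X m ω = 1}).toReal)
    (k : ℕ) (hk : k < M)
    (hp0 : 0 < pbar) (hplt : pbar < ((M : ℝ) - k) / (2 * M)) :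
    (P {ω | 0 ≤ (∑ m, X m ω) + k}).toReal ≤
      ((((M : ℝ) - k) * (1 - pbar)) / (((M : ℝ) + k) * pbar)) ^ ((k : ℝ) / 2) *
        (Real.sqrt (((M : ℝ) - k) / ((M : ℝ) + k)) +
          Real.sqrt (((M : ℝ) + k) / ((M : ℝ) - k))) ^ M *
        (pbar * (1 - pbar)) ^ ((M : ℝ) / 2) :=
  stmt_6_general P M X hmeas hindep hval pbar hpbar k hk hp0 hplt
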